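/- Let k be a field, G a group, and X : Rep k G with underlying module V and action ρ. Suppose (V_g)_{g ∈ G} is a family of k-submodules of V forming an internal direct sum decomposition V = ⊕_{g∈G} V_g and satisfying the conjugation equivariance ρ(h)(V_g) = V_{h g h⁻¹} for all g, h ∈ G. Then there exists a unique half-braiding λ on X such that for every A : Rep k G with action ρ_A, every a ∈ A, every g ∈ G and every x ∈ V_g, one has λ_A(a ⊗ x) = x ⊗ ρ_A(g)a. -/

import Mathlib

/-!
On `A ⊗ W g` the half-braiding is forced to be `a ⊗ x ↦ x ⊗ g • a`; since the `W g` form an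
internal direct sum of `X`, this glues to a linear isomorphism `A ⊗ X ≃ X ⊗ A`, with inverse
`x ⊗ a ↦ g⁻¹ • a ⊗ x`. The conjugation equivariance `h • W g = W (h g h⁻¹)` is exactly what makes
it `G`-equivariant, and naturality, the tensor compatibility and uniqueness all reduce to
identities on tensors `x ⊗ a` with `x` homogeneous.
-/

open CategoryTheory CategoryTheory.MonoidalCategory TensorProduct

universe u

namespace LinearMap

variable {R M N ι : Type*} [Semiring R] [AddCommMonoid M] [Module R M] [AddCommMonoid N]
  [Module R N] {W : ι → Submodule R M}

theorem ext_of_iSup_eq_top (hW : iSup W = ⊤) {f g : M →ₗ[R] N}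
    (h : ∀ i, f ∘ₗ (W i).subtype = g ∘ₗ (W i).subtype) : f = g := by
  have : iSup W ≤ eqLocus f g := iSup_le fun i x hx => congr($(h i) ⟨x, hx⟩)
  exact ext fun x => this (hW ▸ Submodule.mem_top)

end LinearMap

namespace TensorProduct

variable {R M N P ι : Type*} [CommSemiring R] [AddCommMonoid M] [Module R M] [AddCommMonoid N]
  [Module R N] [AddCommMonoid P] [Module R P] {W : ι → Submodule R M}

theorem ext_of_iSup_eq_top_left (hW : iSup W = ⊤) {f g : M ⊗[R] N →ₗ[R] P}
    (h : ∀ i, f ∘ₗ (W i).subtype.rTensor N = g ∘ₗ (W i).subtype.rTensor N) : f = g :=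
  curry_injective <| LinearMap.ext_of_iSup_eq_top hW fun i => by
    ext x n
    exact congr($(h i) (x ⊗ₜ n))

theorem ext_of_iSup_eq_top_right (hW : iSup W = ⊤) {f g : N ⊗[R] M →ₗ[R] P}
    (h : ∀ i, f ∘ₗ (W i).subtype.lTensor N = g ∘ₗ (W i).subtype.lTensor N) : f = g :=
  curry_injective <| LinearMap.flip_inj <| LinearMap.ext_of_iSup_eq_top hW fun i => by
    ext x n
    exact congr($(h i) (n ⊗ₜ x))

end TensorProduct

namespace DirectSum.IsInternal

variable {R M N ι : Type*} [CommSemiring R] [AddCommMonoid M] [Module R M] [AddCommMonoid N]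
  [Module R N] [DecidableEq ι] {W : ι → Submodule R M} (hW : IsInternal W)

noncomputable def lift (φ : ∀ i, W i →ₗ[R] N) : M →ₗ[R] N :=
  toModule R ι N φ ∘ₗ (LinearEquiv.ofBijective (coeLinearMap W) hW).symm

theorem lift_apply_of_mem (φ : ∀ i, W i →ₗ[R] N) {i : ι} {x : M} (hx : x ∈ W i) :
    hW.lift φ x = φ i ⟨x, hx⟩ := by
  have hdecomp : (LinearEquiv.ofBijective (coeLinearMap W) hW).symm x =
      lof R ι (fun i => W i) i ⟨x, hx⟩ := by
    rw [LinearEquiv.symm_apply_eq]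
    exact (coeLinearMap_of W i ⟨x, hx⟩).symm
  simp [lift, hdecomp]

variable {A B : Type*} [AddCommMonoid A] [Module R A] [AddCommMonoid B] [Module R B]

noncomputable def gradedLTensor (f : ι → A →ₗ[R] B) : M ⊗[R] A →ₗ[R] M ⊗[R] B :=
  TensorProduct.lift <| hW.lift fun i => (TensorProduct.mk R M B).compl₂ (f i) ∘ₗ (W i).subtype

theorem gradedLTensor_tmul (f : ι → A →ₗ[R] B) {i : ι} {x : M} (hx : x ∈ W i) (a : A) :
    hW.gradedLTensor f (x ⊗ₜ a) = x ⊗ₜ f i a := by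
  simp [gradedLTensor, hW.lift_apply_of_mem _ hx]

end DirectSum.IsInternal

@[ext]
theorem CategoryTheory.HalfBraiding.ext {C : Type*} [Category C] [MonoidalCategory C] {X : C}
    {l l' : HalfBraiding X} (h : ∀ U, (l.β U).hom = (l'.β U).hom) : l = l' := by
  cases l
  cases l'
  congr
  funext U
  exact Iso.ext (h U)

namespace Rep

variable {k G : Type u} [CommRing k] [Group G] [DecidableEq G] {X : Rep k G}
  {W : G → Submodule k X} (hW : DirectSum.IsInternal W)

noncomputable def gradedBraidingEquiv (A : Rep k G) : A ⊗[k] X ≃ₗ[k] X ⊗[k] A :=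
  LinearEquiv.ofLinearMap
    (f := hW.gradedLTensor (fun g => A.ρ g) ∘ₗ (TensorProduct.comm k A X).toLinearMap)
    (g := (TensorProduct.comm k X A).toLinearMap ∘ₗ hW.gradedLTensor (fun g => A.ρ g⁻¹))
    (TensorProduct.ext_of_iSup_eq_top_left hW.submodule_iSup_eq_top fun _ =>
      TensorProduct.ext' fun x a => by simp [hW.gradedLTensor_tmul _ x.2])
    (TensorProduct.ext_of_iSup_eq_top_right hW.submodule_iSup_eq_top fun _ =>
      TensorProduct.ext' fun a x => by simp [hW.gradedLTensor_tmul _ x.2])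

theorem gradedBraidingEquiv_tmul (A : Rep k G) (a : A) {g : G} {x : X} (hx : x ∈ W g) :
    gradedBraidingEquiv hW A (a ⊗ₜ x) = x ⊗ₜ A.ρ g a := by
  simp [gradedBraidingEquiv, hW.gradedLTensor_tmul _ hx]

theorem gradedBraidingEquiv_symm_tmul (A : Rep k G) (a : A) {g : G} {x : X} (hx : x ∈ W g) :
    (gradedBraidingEquiv hW A).symm (x ⊗ₜ a) = A.ρ g⁻¹ a ⊗ₜ x := by
  simp [gradedBraidingEquiv, hW.gradedLTensor_tmul _ hx]

variable (hconj : ∀ g h : G, (W g).map (X.ρ h) = W (h * g * h⁻¹))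
include hconj

theorem gradedBraidingEquiv_comp_tprod (A : Rep k G) (h : G) :
    (gradedBraidingEquiv hW A).toLinearMap ∘ₗ A.ρ.tprod X.ρ h =
      X.ρ.tprod A.ρ h ∘ₗ (gradedBraidingEquiv hW A).toLinearMap := by
  refine TensorProduct.ext_of_iSup_eq_top_right hW.submodule_iSup_eq_top fun g =>
    TensorProduct.ext' fun a x => ?_
  have hx : X.ρ h x ∈ W (h * g * h⁻¹) := hconj g h ▸ Submodule.mem_map_of_mem x.2
  -- both sides are `h • x ⊗ (h g) • a`, as `(h g h⁻¹) h = h g`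
  simp [Representation.tprod_apply, gradedBraidingEquiv_tmul hW _ _ hx,
    gradedBraidingEquiv_tmul hW _ _ x.2, ← Module.End.mul_apply, ← map_mul]

noncomputable def halfBraidingOfGrading : HalfBraiding X where
  β A := (mkIso (.mk (gradedBraidingEquiv hW A) (gradedBraidingEquiv_comp_tprod hW hconj A))).symm
  monoidal A B := by
    ext : 2
    refine TensorProduct.ext_of_iSup_eq_top_left hW.submodule_iSup_eq_top fun g =>
      TensorProduct.ext_threefold' fun x a b => ?_
    simp [gradedBraidingEquiv_symm_tmul hW _ _ x.2, Representation.tprod_apply]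
  naturality f := by
    ext : 2
    refine TensorProduct.ext_of_iSup_eq_top_left hW.submodule_iSup_eq_top fun g =>
      TensorProduct.ext' fun x a => ?_
    simp [gradedBraidingEquiv_symm_tmul hW _ _ x.2, hom_comm_apply]

end Rep

/-- Let `X : Rep k G` with underlying module `V` and action `ρ`. A family
of submodules `(W g)_{g : G}` forming an internal direct sum decomposition of `V` and
satisfying the conjugation equivariance `ρ(h)(W g) = W (h * g * h⁻¹)` determines a unique
half-braiding `l` on `X` such that for every `A : Rep k G`, `a ∈ A`, `g : G` and `x ∈ W g`,
the component `A ⊗ X ⟶ X ⊗ A` (i.e. `(l.β A).inv` in Mathlib's convention) sends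
`a ⊗ x` to `x ⊗ ρ_A(g) a`. -/
theorem halfBraiding_of_conjugation_equivariant_grading
    {k G : Type u} [Field k] [Group G] [DecidableEq G] (X : Rep k G)
    (W : G → Submodule k X)
    (hW : DirectSum.IsInternal W)
    (hconj : ∀ g h : G, (W g).map (X.ρ h) = W (h * g * h⁻¹)) :
    ∃! l : HalfBraiding X,
      ∀ (A : Rep k G) (a : A) (g : G) (x : X), x ∈ W g →
        (l.β A).inv.hom (a ⊗ₜ[k] x) = x ⊗ₜ[k] (A.ρ g a) := by
  refine ⟨Rep.halfBraidingOfGrading hW hconj,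
    fun A a g x hx => Rep.gradedBraidingEquiv_tmul hW A a hx, fun l hl => ?_⟩
  ext A : 1
  refine (Iso.inv_eq_inv _ _).mp (Rep.hom_ext (Representation.IntertwiningMap.ext ?_))
  exact TensorProduct.ext_of_iSup_eq_top_right hW.submodule_iSup_eq_top fun g =>
    TensorProduct.ext' fun a x =>
      (hl A a g x x.2).trans (Rep.gradedBraidingEquiv_tmul hW A a x.2).symm
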